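/- Sim(𝔾₁, 𝔾₂) = 1 if and only if the set of unordered pairs of vertex types realized by edges of 𝔾₁ equals the set realized by edges of 𝔾₂, under the additional assumption that both graphs have no isolated vertices. -/

import Mathlib

open scoped Classical

/-- A road scenario: a finite undirected graph with vertex type labels. -/
structure LGraph where
  V : Finset ℕ
  E : Finset (Sym2 ℕ)
  label : ℕ → ℕ
  edge_mem : ∀ e ∈ E, ∀ x ∈ e, x ∈ V

/-- DE(e, G') = 1: G' contains an edge with the same unordered pair of vertex types. -/
def DE (G G' : LGraph) (e : Sym2 ℕ) : Prop :=
  ∃ e' ∈ G'.E, Sym2.map G'.label e' = Sym2.map G.label e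

/-- DV(u, G') = 1: every edge of G incident to u is duplicated in G'. -/
def DV (G G' : LGraph) (u : ℕ) : Prop :=
  ∀ e ∈ G.E, u ∈ e → DE G G' e

noncomputable def DVval (G G' : LGraph) (u : ℕ) : ℚ :=
  if DV G G' u then 1 else 0

/-- The topology similarity metric between two road scenarios. -/
noncomputable def Sim (G₁ G₂ : LGraph) : ℚ :=
  ((∑ u ∈ G₁.V, DVval G₁ G₂ u) + (∑ v ∈ G₂.V, DVval G₂ G₁ v)) /
    ((G₁.V.card : ℚ) + (G₂.V.card : ℚ))

/-- The set of unordered pairs of vertex types realized by the edges of G. -/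
def typePairs (G : LGraph) : Finset (Sym2 ℕ) :=
  G.E.image (Sym2.map G.label)

/-! Each sum in the numerator of `Sim` counts the vertices satisfying `DV`, so it is at most the
corresponding vertex count; hence `Sim G₁ G₂ = 1` forces every vertex of both graphs to satisfy
`DV`. Since every edge has an endpoint, "every vertex of `G` satisfies `DV G G'`" says exactly that
every type pair of `G` is a type pair of `G'`. -/

open Finset

namespace LGraph

lemma sum_DVval_eq_card_filter (G G' : LGraph) :
    ∑ u ∈ G.V, DVval G G' u = #(G.V.filter (DV G G')) := by
  simp [DVval]

lemma forall_DV_iff_typePairs_subset (G G' : LGraph) :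
    (∀ u ∈ G.V, DV G G' u) ↔ typePairs G ⊆ typePairs G' := by
  unfold typePairs
  constructor
  · rintro hDV _ hp
    obtain ⟨e, he, rfl⟩ := mem_image.mp hp
    obtain ⟨e', he', hlabel⟩ :=
      hDV e.out.1 (G.edge_mem e he _ (Sym2.out_fst_mem e)) e he (Sym2.out_fst_mem e)
    exact mem_image.mpr ⟨e', he', hlabel⟩
  · intro hsub u _ e he _
    exact mem_image.mp (hsub (mem_image_of_mem _ he))

lemma sim_eq_one_iff_forall_DV (G₁ G₂ : LGraph) (h₁ : G₁.V.Nonempty) :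
    Sim G₁ G₂ = 1 ↔ (∀ u ∈ G₁.V, DV G₁ G₂ u) ∧ (∀ v ∈ G₂.V, DV G₂ G₁ v) := by
  have hpos : (0 : ℚ) < #G₁.V + #G₂.V := by positivity
  rw [Sim, div_eq_one_iff_eq hpos.ne', sum_DVval_eq_card_filter, sum_DVval_eq_card_filter,
    ← card_filter_eq_iff, ← card_filter_eq_iff]
  norm_cast
  exact add_eq_add_iff_eq_and_eq (card_filter_le _ _) (card_filter_le _ _)

end LGraph

theorem sim_eq_one_iff_typePairs_general (G₁ G₂ : LGraph)
    (h₁ : G₁.V.Nonempty) :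
    Sim G₁ G₂ = 1 ↔ typePairs G₁ = typePairs G₂ := by
  rw [G₁.sim_eq_one_iff_forall_DV G₂ h₁, G₁.forall_DV_iff_typePairs_subset G₂,
    G₂.forall_DV_iff_typePairs_subset G₁, Subset.antisymm_iff]

theorem sim_eq_one_iff_typePairs (G₁ G₂ : LGraph)
    (h₁ : G₁.V.Nonempty) (h₂ : G₂.V.Nonempty)
    (hiso₁ : ∀ u ∈ G₁.V, ∃ e ∈ G₁.E, u ∈ e)
    (hiso₂ : ∀ v ∈ G₂.V, ∃ e ∈ G₂.E, v ∈ e) :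
    Sim G₁ G₂ = 1 ↔ typePairs G₁ = typePairs G₂ :=
  sim_eq_one_iff_typePairs_general G₁ G₂ h₁
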